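/- arXiv:1903.04454 — 6 statements merged into one kernel-verified Lean document; each statement's English description precedes it below -/
import Mathlib

section
/- For all non-negative integers A1, A2, C1, C2, one has (A1+C1)! * (A2+C2)! ≤ (A1+A2+max(C1,C2))! * (min(C1,C2))!. -/
open Nat

lemma asc_mono (k : ℕ) : ∀ {m n : ℕ}, m ≤ n → m.ascFactorial k ≤ n.ascFactorial k := by
  induction k with
  | zero => intro m n h; simp [Nat.ascFactorial]
  | succ k ih =>
    intro m n h
    simp only [Nat.ascFactorial]
    exact Nat.mul_le_mul (Nat.add_le_add_right h k) (ih h)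

lemma aux (A1 A2 C1 C2 : ℕ) (h : C1 ≤ C2) :
    (A1 + C1)! * (A2 + C2)! ≤ (A1 + A2 + C2)! * C1 ! := by
  have e1 : (A1 + C1)! = C1 ! * (C1 + 1).ascFactorial A1 := by
    rw [Nat.factorial_mul_ascFactorial, Nat.add_comm]
  have e2 : (A1 + A2 + C2)! = (A2 + C2)! * (A2 + C2 + 1).ascFactorial A1 := by
    rw [Nat.factorial_mul_ascFactorial]
    ring_nf
  rw [e1, e2]
  calc C1 ! * (C1 + 1).ascFactorial A1 * (A2 + C2)!
      ≤ C1 ! * (A2 + C2 + 1).ascFactorial A1 * (A2 + C2)! := by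
        exact Nat.mul_le_mul_right _ (Nat.mul_le_mul_left _
          (asc_mono _ (by omega)))
    _ = (A2 + C2)! * (A2 + C2 + 1).ascFactorial A1 * C1 ! := by ring

theorem stmt0 (A1 A2 C1 C2 : ℕ) :
    (A1 + C1)! * (A2 + C2)! ≤ (A1 + A2 + max C1 C2)! * (min C1 C2)! := by
  rcases le_total C1 C2 with h | h
  · rw [max_eq_right h, min_eq_left h]; exact aux A1 A2 C1 C2 h
  · rw [max_eq_left h, min_eq_right h]
    have := aux A2 A1 C2 C1 h
    have e : A2 + A1 + C1 = A1 + A2 + C1 := by ring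
    rw [e] at this
    linarith [this]
end

section
/- Let r ≥ 2 be an integer and suppose |μ| ≥ r·n (where |μ| is a positive integer and n ≥ 2). Then for every integer ℓ with 3 ≤ ℓ ≤ (n-2)/2, the quantity T(ℓ) = (rℓ)! · (|μ|-2-rℓ)! / (ℓ! · (n-2-ℓ)!) satisfies T(ℓ) ≤ T(ℓ-1); i.e., the function ℓ ↦ (rℓ)!(|μ|-2-rℓ)!/(ℓ!(n-2-ℓ)!) is non-increasing on 3 ≤ ℓ ≤ (n-2)/2. -/
open Nat

lemma aux_fact (a b k : ℕ) (hab : a ≤ b) : (a + k)! * b ! ≤ a ! * (b + k)! := by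
  induction k with
  | zero => simp [Nat.mul_comm]
  | succ k ih =>
      have h1 : (a + (k+1))! = (a + k + 1) * (a + k)! := by
        rw [show a + (k+1) = (a+k) + 1 by ring, Nat.factorial_succ]
      have h2 : (b + (k+1))! = (b + k + 1) * (b + k)! := by
        rw [show b + (k+1) = (b+k) + 1 by ring, Nat.factorial_succ]
      calc (a + (k+1))! * b ! = (a + k + 1) * ((a + k)! * b !) := by rw [h1]; ring
        _ ≤ (b + k + 1) * (a ! * (b + k)!) :=
            Nat.mul_le_mul (by omega) ih
        _ = a ! * (b + (k+1))! := by rw [h2]; ring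

/-- For `r ≥ 2`, `n ≥ 2`, `|μ| ≥ r·n`, the quantity
`T(ℓ) = (rℓ)! (|μ|-2-rℓ)! / (ℓ! (n-2-ℓ)!)` is non-increasing for `3 ≤ ℓ ≤ (n-2)/2`. -/
theorem stmt2 (r n μ : ℕ) (hr : 2 ≤ r) (hn : 2 ≤ n) (hμpos : 0 < μ) (hμ : r * n ≤ μ)
    (ℓ : ℕ) (hl : 3 ≤ ℓ) (hl2 : 2 * ℓ ≤ n - 2) :
    ((r * ℓ)! * (μ - 2 - r * ℓ)! : ℚ) / ((ℓ)! * (n - 2 - ℓ)!) ≤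
      ((r * (ℓ - 1))! * (μ - 2 - r * (ℓ - 1))! : ℚ) / ((ℓ - 1)! * (n - 2 - (ℓ - 1))!) := by
  obtain ⟨L, rfl⟩ : ∃ L, ℓ = L + 1 := ⟨ℓ - 1, by omega⟩
  obtain ⟨q, rfl⟩ : ∃ q, r = q + 1 := ⟨r - 1, by omega⟩
  have hq : 1 ≤ q := by omega
  have hL : 2 ≤ L := by omega
  set s := n - 2 - (L + 1) with hs
  -- nonlinear helper facts
  have hmul1 : 2 * ((q+1) * (L + 1)) ≤ (q+1) * (n - 2) := by
    calc 2 * ((q+1) * (L + 1)) = (q+1) * (2 * (L + 1)) := by ring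
      _ ≤ (q+1) * (n - 2) := Nat.mul_le_mul_left _ hl2
  have hmul2 : (q+1) * (n - 2) + (q+1) * 2 = (q+1) * n := by
    rw [← Nat.mul_add]; congr 1; omega
  have hmul3 : (q+1) * s + (q+1) * (L + 1) ≤ (q+1) * (n - 2) := by
    rw [← Nat.mul_add]
    exact Nat.mul_le_mul_left _ (by omega)
  have hXL : (q+1) * L + (q+1) = (q+1) * (L + 1) := by ring
  -- key bounds
  have hbound : 2 * ((q+1) * (L+1)) + 2 * (q+1) ≤ μ := by omega
  set m := μ - 2 - (q+1) * (L + 1) with hm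
  have hm1 : (q+1) * (L + 1) + 2 ≤ μ := by omega
  have hab : (q+1) * L ≤ m := by omega
  have hrs : (q+1) * s ≤ m := by omega
  have hsub1 : μ - 2 - (q+1) * L = m + (q+1) := by omega
  have hsub2 : n - 2 - L = s + 1 := by omega
  -- key product inequality
  have hkey : ((q+1) * L + q + 1) * (s + 1) ≤ (m + q + 1) * (L + 1) := by
    have h1 : (q+1) * (s + 1) ≤ m + (q+1) := by
      have : (q+1) * (s+1) = (q+1)*s + (q+1) := by ring
      omega
    calc ((q+1) * L + q + 1) * (s + 1) = ((q+1) * (s + 1)) * (L + 1) := by ring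
      _ ≤ (m + (q+1)) * (L + 1) := Nat.mul_le_mul_right _ h1
      _ = (m + q + 1) * (L + 1) := by ring
  -- the natural-number inequality
  have hnat : ((q+1) * (L+1))! * m ! * (L ! * (s+1)!) ≤
      ((q+1) * L)! * (m + (q+1))! * ((L+1)! * s !) := by
    have e1 : ((q+1) * (L+1))! = ((q+1)*L + q + 1) * ((q+1)*L + q)! := by
      rw [show (q+1) * (L+1) = ((q+1)*L + q) + 1 by ring, Nat.factorial_succ]
    have e2 : (m + (q+1))! = (m + q + 1) * (m + q)! := by
      rw [show m + (q+1) = (m + q) + 1 by ring, Nat.factorial_succ]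
    have haux := aux_fact ((q+1)*L) m q hab
    have h2' : (((q+1)*L + q + 1) * (s+1)) * (((q+1)*L + q)! * m ! * (L ! * s !)) ≤
        ((m+q+1)*(L+1)) * (((q+1)*L)! * (m+q)! * (L ! * s !)) :=
      Nat.mul_le_mul hkey (Nat.mul_le_mul_right _ haux)
    have es : (s+1)! = (s+1) * s ! := Nat.factorial_succ s
    have eLs : (L+1)! = (L+1) * L ! := Nat.factorial_succ L
    have eL : ((q+1) * (L+1))! * m ! * (L ! * (s+1)!) =
        (((q+1)*L + q + 1) * (s+1)) * (((q+1)*L + q)! * m ! * (L ! * s !)) := by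
      rw [e1, es]; ring
    have eR : ((q+1) * L)! * (m + (q+1))! * ((L+1)! * s !) =
        ((m+q+1)*(L+1)) * (((q+1)*L)! * (m+q)! * (L ! * s !)) := by
      rw [e2, eLs]; ring
    rw [eL, eR]; exact h2'
  -- transfer to ℚ
  have hd1 : (0:ℚ) < ((L+1)! * (n - 2 - (L+1))! : ℕ) := by
    exact_mod_cast Nat.mul_pos (Nat.factorial_pos _) (Nat.factorial_pos _)
  have hd2 : (0:ℚ) < ((L+1-1)! * (n - 2 - (L+1-1))! : ℕ) := by
    exact_mod_cast Nat.mul_pos (Nat.factorial_pos _) (Nat.factorial_pos _)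
  rw [show L + 1 - 1 = L by omega] at hd2 ⊢
  rw [div_le_div_iff₀ (by push_cast at hd1 ⊢; exact hd1) (by push_cast at hd2 ⊢; exact hd2)]
  have : (((q+1) * (L+1))! * (μ - 2 - (q+1)*(L+1))! * (L ! * (n - 2 - L)!) : ℕ) ≤
      ((q+1) * L)! * (μ - 2 - (q+1)*L)! * ((L+1)! * (n - 2 - (L+1))!) := by
    rw [hsub1, hsub2, ← hm]
    exact hnat
  push_cast
  exact_mod_cast this
end

section
/- The kernel of the difference operator Δ (with (ΔQ)(g,n) = Q(g,n) - Q(g,n-1)) restricted to the span H of the functions Q_{m,ℓ}(g,n) = 1/(g^m (2g-3+n)_ℓ), (m,ℓ) ∈ ℕ², is exactly the span of the Q_{m,0}, m ∈ ℕ. -/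
/-- `Q_{m,ℓ}(g,n) = 1/(g^m (2g-3+n)_ℓ)` where `(x)_ℓ` is the falling factorial. -/
noncomputable def Qml (m l : ℕ) (g n : ℝ) : ℝ :=
  1 / (g ^ m * (descPochhammer ℝ l).eval (2 * g - 3 + n))

/-- The backward difference operator `(ΔQ)(g,n) = Q(g,n) - Q(g,n-1)`. -/
noncomputable def Δop (Q : ℝ → ℝ → ℝ) : ℝ → ℝ → ℝ := fun g n => Q g n - Q g (n - 1)

/-- The span `H` of all the `Q_{m,ℓ}`. -/
noncomputable def Hspan : Submodule ℚ (ℝ → ℝ → ℝ) :=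
  Submodule.span ℚ (Set.range fun p : ℕ × ℕ => fun g n => Qml p.1 p.2 g n)

lemma Qml_zero (m : ℕ) (g n : ℝ) : Qml m 0 g n = 1 / g ^ m := by
  simp [Qml, descPochhammer_zero]

lemma tendsto_Qml (m l : ℕ) (hl : l ≠ 0) (g n : ℝ) :
    Filter.Tendsto (fun k : ℕ => Qml m l g (n + k)) Filter.atTop (nhds 0) := by
  have hdeg : 0 < (descPochhammer ℝ l).degree := by
    rw [Polynomial.degree_eq_natDegree (monic_descPochhammer ℝ l).ne_zero,
      descPochhammer_natDegree]
    exact_mod_cast Nat.pos_of_ne_zero hl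
  have hD : Filter.Tendsto (fun k : ℕ => (descPochhammer ℝ l).eval (2 * g - 3 + (n + k)))
      Filter.atTop Filter.atTop := by
    apply (Polynomial.tendsto_atTop_of_leadingCoeff_nonneg _ hdeg
      (by rw [(monic_descPochhammer ℝ l).leadingCoeff]; norm_num)).comp
    apply Filter.tendsto_atTop_add_const_left
    exact Filter.tendsto_atTop_add_const_left _ n
      (tendsto_natCast_atTop_atTop)
  have h0 : Filter.Tendsto (fun k : ℕ =>
      ((descPochhammer ℝ l).eval (2 * g - 3 + (n + k)))⁻¹) Filter.atTop (nhds 0) :=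
    tendsto_inv_atTop_zero.comp hD
  have := h0.const_mul ((g ^ m)⁻¹)
  rw [mul_zero] at this
  refine this.congr fun k => ?_
  simp [Qml, one_div, mul_inv]; ring

/-- The kernel of `Δ` restricted to `H` is exactly the span of the `Q_{m,0}`, `m ∈ ℕ`. -/
theorem stmt6 (Q : ℝ → ℝ → ℝ) (hQ : Q ∈ Hspan) :
    Δop Q = 0 ↔ Q ∈ Submodule.span ℚ (Set.range fun m : ℕ => fun g n => Qml m 0 g n) := by
  constructor
  · intro hΔ
    obtain ⟨c, hc⟩ := Finsupp.mem_span_range_iff_exists_finsupp.mp hQ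
    have hQeval : ∀ g n, Q g n = ∑ p ∈ c.support, (c p : ℝ) * Qml p.1 p.2 g n := by
      intro g n
      rw [← hc]
      rw [Finsupp.sum]
      rw [Finset.sum_apply, Finset.sum_apply]
      refine Finset.sum_congr rfl fun p _ => ?_
      simp [Rat.smul_def]
    -- shift invariance
    have hstep : ∀ g n : ℝ, Q g n = Q g (n - 1) := by
      intro g n
      have := congrFun (congrFun hΔ g) n
      simp [Δop] at this
      linarith
    have hshift : ∀ (g n : ℝ) (k : ℕ), Q g (n + k) = Q g n := by
      intro g n k
      induction k with
      | zero => simp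
      | succ k ih =>
        have := hstep g (n + (k + 1 : ℕ))
        push_cast at this ⊢
        push_cast at ih
        rw [this]
        rw [show n + (k + 1) - 1 = n + k by ring]
        exact ih
    -- the limit identification
    have hkey : ∀ g n, Q g n =
        ∑ p ∈ c.support, (if p.2 = 0 then (c p : ℝ) * Qml p.1 0 g n else 0) := by
      intro g n
      have h1 : Filter.Tendsto (fun k : ℕ => Q g (n + k)) Filter.atTop (nhds (Q g n)) := by
        simpa [hshift g n] using (tendsto_const_nhds :
          Filter.Tendsto (fun _ : ℕ => Q g n) Filter.atTop (nhds (Q g n)))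
      have h2 : Filter.Tendsto (fun k : ℕ => Q g (n + k)) Filter.atTop
          (nhds (∑ p ∈ c.support, (if p.2 = 0 then (c p : ℝ) * Qml p.1 0 g n else 0))) := by
        have : ∀ k : ℕ, Q g (n + k) = ∑ p ∈ c.support, (c p : ℝ) * Qml p.1 p.2 g (n + k) :=
          fun k => hQeval g (n + k)
        rw [Filter.tendsto_congr this]
        apply tendsto_finset_sum
        intro p _
        by_cases hp : p.2 = 0
        · have : ∀ k : ℕ, (c p : ℝ) * Qml p.1 p.2 g (n + k)
              = (c p : ℝ) * Qml p.1 0 g n := by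
            intro k; rw [hp, Qml_zero, Qml_zero]
          rw [Filter.tendsto_congr this]
          simp only [if_pos hp]
          exact tendsto_const_nhds
        · simp only [if_neg hp]
          simpa using (tendsto_Qml p.1 p.2 hp g n).const_mul ((c p : ℝ))
      exact tendsto_nhds_unique h1 h2
    have hQform : Q = ∑ p ∈ c.support,
        (if p.2 = 0 then c p else 0) • (fun g n => Qml p.1 0 g n) := by
      funext g n
      rw [hkey g n, Finset.sum_apply, Finset.sum_apply]
      refine Finset.sum_congr rfl fun p _ => ?_
      by_cases hp : p.2 = 0 <;> simp [hp, Rat.smul_def]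
    rw [hQform]
    exact Submodule.sum_mem _ fun p _ => Submodule.smul_mem _ _
      (Submodule.subset_span ⟨p.1, rfl⟩)
  · intro h
    have key : ∀ g n : ℝ, Q g n = Q g (n - 1) := by
      have : ∀ f ∈ Submodule.span ℚ (Set.range fun m : ℕ => fun g n => Qml m 0 g n),
          ∀ g n : ℝ, f g n = f g (n - 1) := by
        intro f hf
        induction hf using Submodule.span_induction with
        | mem f hf =>
          obtain ⟨m, rfl⟩ := hf
          intro g n
          show Qml m 0 g n = Qml m 0 g (n - 1)
          rw [Qml_zero, Qml_zero]
        | zero => intro g n; simp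
        | add f₁ f₂ _ _ h₁ h₂ => intro g n; simp [h₁ g n, h₂ g n]
        | smul a f _ hf => intro g n; simp [Rat.smul_def, hf g n]
      exact this Q h
    funext g n
    simp [Δop, ← key g n]
end

section
/- Let r ≥ 0 and let Q = Σ_{m+ℓ=r} c_{m,ℓ} / (g^m (2g-3+n)_ℓ) be a real linear combination of the functions Q_{m,ℓ} with m+ℓ = r. If there exist constants g₀, C, λ > 0 such that |Q(g,n)| < C/g^{r+1} for all integers g ≥ g₀ and all integers 1 ≤ n ≤ λg, then all coefficients c_{m,ℓ} vanish, i.e., Q = 0. -/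
open Filter Topology Finset Polynomial

theorem eq_zero_of_sum_mul_pow_sub_eq_zero {R : Type*} [CommRing R] [IsDomain R] {r : ℕ}
    {c : ℕ → R} {S : Set R} (hS : S.Infinite)
    (h : ∀ x ∈ S, ∑ m ∈ range (r + 1), c m * x ^ (r - m) = 0) {m : ℕ} (hm : m ≤ r) :
    c m = 0 := by
  set p : R[X] := ∑ k ∈ range (r + 1), C (c k) * X ^ (r - k)
  have hp : p = 0 := by
    refine eq_zero_of_infinite_isRoot p (hS.mono fun x hx => ?_)
    simpa [p, eval_finsetSum] using h x hx
  have hcoeff : p.coeff (r - m) = c m := by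
    simp only [p, finsetSum_coeff, coeff_C_mul_X_pow]
    refine (sum_eq_single_of_mem m (mem_range.2 (Nat.lt_succ_of_le hm)) fun k hk hkm => ?_).trans
      (if_pos rfl)
    rw [if_neg]
    have := mem_range.1 hk
    omega
  rw [← hcoeff, hp, coeff_zero]

theorem tendsto_descPochhammer_eval_div_pow {x : ℕ → ℝ} {a : ℝ}
    (hx : Tendsto (fun g : ℕ => x g / g) atTop (𝓝 a)) (l : ℕ) :
    Tendsto (fun g : ℕ => (descPochhammer ℝ l).eval (x g) / (g : ℝ) ^ l) atTop (𝓝 (a ^ l)) := by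
  induction l with
  | zero => simp
  | succ l ih =>
    have hfactor : Tendsto (fun g : ℕ => (x g - l) / g) atTop (𝓝 a) := by
      simpa [sub_div] using hx.sub (tendsto_const_div_atTop_nhds_zero_nat (l : ℝ))
    simpa only [descPochhammer_succ_eval, pow_succ, mul_div_mul_comm] using ih.mul hfactor

theorem pow_add_mul_Qml {g : ℝ} (hg : g ≠ 0) (m l : ℕ) (n : ℝ) :
    g ^ (m + l) * Qml m l g n = ((descPochhammer ℝ l).eval (2 * g - 3 + n) / g ^ l)⁻¹ := by
  rw [Qml, inv_div, pow_add, one_div, mul_inv, mul_mul_mul_comm,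
    mul_inv_cancel₀ (pow_ne_zero m hg), one_mul, div_eq_mul_inv]

theorem tendsto_pow_mul_sum_Qml (r : ℕ) (c : ℕ → ℝ) {n : ℕ → ℝ} {s : ℝ}
    (hn : Tendsto (fun g : ℕ => n g / g) atTop (𝓝 s)) (hs : 2 + s ≠ 0) :
    Tendsto (fun g : ℕ => (g : ℝ) ^ r * ∑ m ∈ range (r + 1), c m * Qml m (r - m) g (n g))
      atTop (𝓝 (∑ m ∈ range (r + 1), c m * (2 + s)⁻¹ ^ (r - m))) := by
  have hx : Tendsto (fun g : ℕ => (2 * g - 3 + n g) / g) atTop (𝓝 (2 + s)) := by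
    have hlim := ((tendsto_const_nhds (x := (2 : ℝ))).sub
      (tendsto_const_div_atTop_nhds_zero_nat (3 : ℝ))).add hn
    rw [sub_zero] at hlim
    refine hlim.congr' ?_
    filter_upwards [eventually_ne_atTop 0] with g hg
    field_simp
  simp only [mul_sum]
  refine tendsto_finsetSum _ fun m hm => ?_
  have hmr : m + (r - m) = r := Nat.add_sub_cancel' (Nat.le_of_lt_succ (mem_range.1 hm))
  have hterm := ((tendsto_descPochhammer_eval_div_pow hx (r - m)).inv₀
    (pow_ne_zero _ hs)).const_mul (c m)
  rw [inv_pow]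
  refine hterm.congr' ?_
  filter_upwards [eventually_ne_atTop 0] with g hg
  rw [mul_left_comm, ← pow_add_mul_Qml (Nat.cast_ne_zero.2 hg), hmr]

theorem tendsto_pow_mul_of_abs_lt_div_pow {u : ℕ → ℝ} {C : ℝ} (r : ℕ)
    (hu : ∀ᶠ g in atTop, |u g| < C / (g : ℝ) ^ (r + 1)) :
    Tendsto (fun g : ℕ => (g : ℝ) ^ r * u g) atTop (𝓝 0) := by
  refine squeeze_zero_norm' ?_ (tendsto_const_div_atTop_nhds_zero_nat C)
  filter_upwards [hu, eventually_ne_atTop 0] with g hug hg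
  have hg' : (g : ℝ) ≠ 0 := Nat.cast_ne_zero.2 hg
  calc ‖(g : ℝ) ^ r * u g‖ = (g : ℝ) ^ r * |u g| := by
        rw [Real.norm_eq_abs, abs_mul, abs_of_nonneg (by positivity)]
    _ ≤ (g : ℝ) ^ r * (C / (g : ℝ) ^ (r + 1)) := by gcongr
    _ = C / g := by field_simp; ring

theorem sum_mul_inv_pow_eq_zero {r : ℕ} {c : ℕ → ℝ} {g₀ C lam : ℝ}
    (h : ∀ g n : ℕ, g₀ ≤ (g : ℝ) → 1 ≤ n → (n : ℝ) ≤ lam * g →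
      |∑ m ∈ range (r + 1), c m * Qml m (r - m) g n| < C / (g : ℝ) ^ (r + 1))
    {s : ℝ} (hs : s ∈ Set.Ioo 0 lam) :
    ∑ m ∈ range (r + 1), c m * (2 + s)⁻¹ ^ (r - m) = 0 := by
  have hn : Tendsto (fun g : ℕ => (⌈s * g⌉₊ : ℝ) / g) atTop (𝓝 s) :=
    (tendsto_nat_ceil_mul_div_atTop hs.1.le).comp tendsto_natCast_atTop_atTop
  have hbound : ∀ᶠ g : ℕ in atTop, |∑ m ∈ range (r + 1), c m * Qml m (r - m) g ⌈s * g⌉₊|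
      < C / (g : ℝ) ^ (r + 1) := by
    filter_upwards [tendsto_natCast_atTop_atTop.eventually_ge_atTop g₀,
      hn.eventually (gt_mem_nhds hs.2), eventually_gt_atTop 0] with g hg₀ hlam hg
    have hg' : (0 : ℝ) < g := Nat.cast_pos.2 hg
    refine h g _ hg₀ (Nat.one_le_ceil_iff.2 (mul_pos hs.1 hg')) ?_
    rw [div_lt_iff₀ hg'] at hlam
    exact hlam.le
  exact tendsto_nhds_unique (tendsto_pow_mul_sum_Qml r c hn (by linarith [hs.1]))
    (tendsto_pow_mul_of_abs_lt_div_pow r hbound)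

theorem stmt7_general (r : ℕ) (c : ℕ → ℝ) (g₀ C lam : ℝ)
    (hlam : 0 < lam)
    (h : ∀ g n : ℕ, g₀ ≤ (g : ℝ) → 1 ≤ n → (n : ℝ) ≤ lam * g →
      |∑ m ∈ Finset.range (r + 1), c m * Qml m (r - m) g n| < C / (g : ℝ) ^ (r + 1)) :
    ∀ m, m ≤ r → c m = 0 := by
  have hinj : Set.InjOn (fun s : ℝ => (2 + s)⁻¹) (Set.Ioo 0 lam) :=
    (inv_injective.comp (add_right_injective 2)).injOn
  intro m hm
  refine eq_zero_of_sum_mul_pow_sub_eq_zero ((Set.Ioo_infinite hlam).image hinj) ?_ hm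
  rintro _ ⟨s, hs, rfl⟩
  exact sum_mul_inv_pow_eq_zero h hs

/-- If `Q = Σ_{m+ℓ=r} c_m Q_{m,r-m}` satisfies `|Q(g,n)| < C/g^{r+1}` for all integers
`g ≥ g₀` and `1 ≤ n ≤ λg`, then all the coefficients vanish. -/
theorem stmt7 (r : ℕ) (c : ℕ → ℝ) (g₀ C lam : ℝ) (hg₀ : 0 < g₀) (hC : 0 < C)
    (hlam : 0 < lam)
    (h : ∀ g n : ℕ, g₀ ≤ (g : ℝ) → 1 ≤ n → (n : ℝ) ≤ lam * g →
      |∑ m ∈ Finset.range (r + 1), c m * Qml m (r - m) g n| < C / (g : ℝ) ^ (r + 1)) :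
    ∀ m, m ≤ r → c m = 0 :=
  stmt7_general r c g₀ C lam hlam h
end

section
/- Let r ≥ 2 and suppose μ = (k_1,…,k_n) is a vector of positive integers with all k_i ≥ r, with k_1 and k_2 the two smallest entries, and let |μ| = k_1+⋯+k_n. Then k_1·k_2·(n-2)·(n-3) ≤ (|μ|-2r)(|μ|+1-2r) and n-3 ≤ |μ|+2-2r. -/
/-- If `μ = (k₁,…,kₙ)` has all entries `≥ r ≥ 2`, with `k₁, k₂` the two smallest entries and
`n ≥ 4`, then `k₁k₂(n-2)(n-3) ≤ (|μ|-2r)(|μ|+1-2r)` and `n-3 ≤ |μ|+2-2r`. -/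
theorem stmt14 (r n : ℕ) (hr : 2 ≤ r) (hn : 4 ≤ n) (k : Fin n → ℕ)
    (hk : ∀ i, r ≤ k i)
    (hmin : ∀ i : Fin n, 2 ≤ (i : ℕ) → k ⟨0, by omega⟩ ≤ k i ∧ k ⟨1, by omega⟩ ≤ k i) :
    k ⟨0, by omega⟩ * k ⟨1, by omega⟩ * (n - 2) * (n - 3) ≤
        (∑ i, k i - 2 * r) * (∑ i, k i + 1 - 2 * r) ∧
      n - 3 ≤ ∑ i, k i + 2 - 2 * r := by
  set i0 : Fin n := ⟨0, by omega⟩ with hi0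
  set i1 : Fin n := ⟨1, by omega⟩ with hi1
  have hne : i1 ≠ i0 := by simp [hi0, hi1, Fin.ext_iff]
  set s : Finset (Fin n) := (Finset.univ.erase i0).erase i1 with hs
  have hcard : s.card = n - 2 := by
    rw [hs, Finset.card_erase_of_mem (by simp [hne]), Finset.card_erase_of_mem (by simp)]
    simp
    omega
  have h1 : k i0 + ∑ i ∈ Finset.univ.erase i0, k i = ∑ i, k i :=
    Finset.add_sum_erase _ _ (Finset.mem_univ _)
  have h2 : k i1 + ∑ i ∈ s, k i = ∑ i ∈ Finset.univ.erase i0, k i :=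
    Finset.add_sum_erase _ _ (by simp [hne])
  have hsum : ∑ i, k i = k i0 + k i1 + ∑ i ∈ s, k i := by omega
  have hmem : ∀ i ∈ s, k i0 ≤ k i ∧ k i1 ≤ k i := by
    intro i hi
    rw [hs, Finset.mem_erase, Finset.mem_erase] at hi
    refine hmin i ?_
    have h1' : (i : ℕ) ≠ 1 := fun h => hi.1 (Fin.ext h)
    have h0' : (i : ℕ) ≠ 0 := fun h => hi.2.1 (Fin.ext h)
    omega
  have hA0 : (n - 2) * k i0 ≤ ∑ i ∈ s, k i := by
    have := Finset.card_nsmul_le_sum s k (k i0) (fun i hi => (hmem i hi).1)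
    simpa [hcard, smul_eq_mul] using this
  have hA1 : (n - 2) * k i1 ≤ ∑ i ∈ s, k i := by
    have := Finset.card_nsmul_le_sum s k (k i1) (fun i hi => (hmem i hi).2)
    simpa [hcard, smul_eq_mul] using this
  have hk0 := hk i0
  have hk1 := hk i1
  have ha : ∑ i ∈ s, k i ≤ ∑ i, k i - 2 * r := by omega
  have hb : ∑ i ∈ s, k i ≤ ∑ i, k i + 1 - 2 * r := by omega
  constructor
  · calc k i0 * k i1 * (n - 2) * (n - 3)
        ≤ ((n - 2) * k i0) * ((n - 2) * k i1) := by
          have h32 : n - 3 ≤ n - 2 := by omega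
          calc k i0 * k i1 * (n - 2) * (n - 3) ≤ k i0 * k i1 * (n - 2) * (n - 2) :=
                Nat.mul_le_mul_left _ h32
            _ = ((n - 2) * k i0) * ((n - 2) * k i1) := by ring
      _ ≤ (∑ i, k i - 2 * r) * (∑ i, k i + 1 - 2 * r) :=
          Nat.mul_le_mul (le_trans hA0 ha) (le_trans hA1 hb)
  · have h2' : n - 2 ≤ (n - 2) * k i0 := Nat.le_mul_of_pos_right _ (by omega)
    omega
end

section
/- Let r ≥ 2 and let μ be a tuple of n positive integers all ≥ r with sum |μ| ≥ rn. Then for every ℓ with 2 ≤ ℓ ≤ (n-2)/2, one has (rℓ)!/(ℓ!(n-2-ℓ)!) · (|μ|-2-rℓ)! ≤ (2r)!/(2!(n-4)!) · (|μ|-2-2r)!; i.e., every term of the sum over 2 ≤ ℓ ≤ (n-2)/2 is bounded by the term at ℓ = 2. -/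
set_option maxHeartbeats 1000000


open Nat

theorem myAscMono {a b : ℕ} (h : a ≤ b) (k : ℕ) :
    a.ascFactorial k ≤ b.ascFactorial k := by
  induction k with
  | zero => simp [Nat.ascFactorial_zero]
  | succ k ih =>
      rw [Nat.ascFactorial_succ, Nat.ascFactorial_succ]
      exact Nat.mul_le_mul (by omega) ih

theorem myBotSplit (x k : ℕ) : x.ascFactorial (k+1) = x * (x+1).ascFactorial k := by
  rw [Nat.ascFactorial_succ, ← Nat.succ_ascFactorial]

theorem natstep (r n μ ℓ : ℕ) (hr : 2 ≤ r) (hμn : r * n ≤ μ)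
    (h : 2 * (ℓ + 1) ≤ n - 2) :
    (r * (ℓ+1))! * (μ - 2 - r * (ℓ+1))! * ((ℓ)! * (n - 2 - ℓ)!) ≤
      (r * ℓ)! * (μ - 2 - r * ℓ)! * ((ℓ+1)! * (n - 2 - (ℓ+1))!) := by
  obtain ⟨s, hs⟩ : ∃ s, n = 2*ℓ + 4 + s := ⟨n - (2*ℓ+4), by omega⟩
  have hrn : r * n = 2*(r*ℓ) + 4*r + r*s := by subst hs; ring
  have hrl1 : r * (ℓ+1) = r*ℓ + r := by ring
  set e := μ - 2 - r*(ℓ+1) with hedef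
  have he : r*ℓ + r*s + 3*r ≤ e + 2 := by omega
  have he2 : μ - 2 - r*ℓ = e + r := by omega
  have hn1 : n - 2 - ℓ = ℓ + 2 + s := by omega
  have hn2 : n - 2 - (ℓ+1) = ℓ + 1 + s := by omega
  have h1 : (r*(ℓ+1))! = (r*ℓ)! * (r*ℓ+1).ascFactorial r := by
    rw [hrl1, ← Nat.factorial_mul_ascFactorial]
  have h2 : (μ - 2 - r*ℓ)! = e ! * (e+1).ascFactorial r := by
    rw [he2, ← Nat.factorial_mul_ascFactorial]
  have h3 : (ℓ+1)! = (ℓ+1) * ℓ ! := Nat.factorial_succ ℓ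
  have h4 : (ℓ+2+s)! = (ℓ+2+s) * (ℓ+1+s)! := by
    have : ℓ+2+s = (ℓ+1+s) + 1 := by ring
    rw [this, Nat.factorial_succ]
  obtain ⟨m, hm⟩ : ∃ m, r = m + 1 := ⟨r - 1, by omega⟩
  have key : (r*ℓ+1).ascFactorial r * (ℓ+2+s) ≤ (ℓ+1) * (e+1).ascFactorial r := by
    have ka : (r*ℓ+1) * (ℓ+2+s) ≤ (ℓ+1) * (e+1) := by
      zify at he hr ⊢
      nlinarith [he, hr, sq_nonneg ((ℓ:ℤ)+s), sq_nonneg ((ℓ:ℤ))]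
    have kb : (r*ℓ+2).ascFactorial m ≤ (e+2).ascFactorial m :=
      myAscMono (by omega) m
    rw [hm] at ka kb ⊢
    rw [myBotSplit, myBotSplit]
    calc ((m+1)*ℓ+1) * ((m+1)*ℓ+1+1).ascFactorial m * (ℓ+2+s)
        = (((m+1)*ℓ+1) * (ℓ+2+s)) * ((m+1)*ℓ+2).ascFactorial m := by ring_nf
      _ ≤ ((ℓ+1) * (e+1)) * (e+2).ascFactorial m := Nat.mul_le_mul ka kb
      _ = (ℓ+1) * ((e+1) * (e+1+1).ascFactorial m) := by ring_nf
  calc (r * (ℓ+1))! * e ! * ((ℓ)! * (n - 2 - ℓ)!)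
      = (r*ℓ)! * e ! * ℓ ! * (ℓ+1+s)! * ((r*ℓ+1).ascFactorial r * (ℓ+2+s)) := by
        rw [h1, hn1, h4]; ring
    _ ≤ (r*ℓ)! * e ! * ℓ ! * (ℓ+1+s)! * ((ℓ+1) * (e+1).ascFactorial r) :=
        Nat.mul_le_mul_left _ key
    _ = (r * ℓ)! * (μ - 2 - r * ℓ)! * ((ℓ+1)! * (n - 2 - (ℓ+1))!) := by
        rw [h2, h3, hn2]; ring

theorem qstep (r n μ ℓ : ℕ) (hr : 2 ≤ r) (hμn : r * n ≤ μ)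
    (h : 2 * (ℓ + 1) ≤ n - 2) :
    (((r * (ℓ+1))! : ℚ) / (((ℓ+1))! * (n - 2 - (ℓ+1))!)) * (μ - 2 - r * (ℓ+1))! ≤
      (((r * ℓ)! : ℚ) / ((ℓ)! * (n - 2 - ℓ)!)) * (μ - 2 - r * ℓ)! := by
  rw [div_mul_eq_mul_div, div_mul_eq_mul_div]
  rw [div_le_div_iff₀ (by positivity) (by positivity)]
  exact_mod_cast natstep r n μ ℓ hr hμn h

/-- For a tuple of `n` positive integers all `≥ r` with sum `μ`, every term
`(rℓ)!/(ℓ!(n-2-ℓ)!) · (μ-2-rℓ)!` with `2 ≤ ℓ ≤ (n-2)/2` is bounded by the term at `ℓ = 2`. -/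
theorem stmt15 (r n : ℕ) (hr : 2 ≤ r) (k : Fin n → ℕ) (hk : ∀ i, r ≤ k i)
    (μ : ℕ) (hμ : μ = ∑ i, k i) (hμn : r * n ≤ μ)
    (ℓ : ℕ) (hl : 2 ≤ ℓ) (hl2 : 2 * ℓ ≤ n - 2) :
    (((r * ℓ)! : ℚ) / ((ℓ)! * (n - 2 - ℓ)!)) * (μ - 2 - r * ℓ)! ≤
      (((2 * r)! : ℚ) / ((2)! * (n - 4)!)) * (μ - 2 - 2 * r)! := by
  revert hl2
  induction ℓ, hl using Nat.le_induction with
  | base =>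
      intro _
      have e1 : r * 2 = 2 * r := by ring
      have e2 : n - 2 - 2 = n - 4 := by omega
      rw [e1, e2]
  | succ ℓ hℓ ih =>
      intro h
      exact (qstep r n μ ℓ hr hμn h).trans (ih (by omega))
end
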